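/- Let n ≥ 1, and fix constants Θ₀ ∈ ℝ, c > 0, α ∈ [0, 2], a nonnegative kernel K : ℝⁿ × ℝⁿ → [0, +∞), a vector field ω : ℝⁿ × ℝ → ℝⁿ, and β : ℝ → ℝ. Let u : ℝⁿ × ℝ → ℝ be twice differentiable in space and differentiable in time, and let γ : ℝⁿ⁻¹ × ℝ → ℝ be twice differentiable in space and differentiable in time, with u(x', γ(x',t), t) = Θ₀ for all x' ∈ ℝⁿ⁻¹ and t ∈ ℝ, γ(0,0) = 0, ∇_{x'} γ(0,0) = 0, and ∂_{x_n} u(0,0) > 0. Suppose u satisfies at the space-time point (0,0): ∂_t u = c Δu + ∫_{ℝⁿ} (u(y,0) − Θ₀)₊ K(0,y) dy + ((ω(0,0) − β(u(0,0)) ∇u(0,0)/|∇u(0,0)|^α) · ∇u(0,0))₋, with the integral well defined. Then the normal velocity of the level-set graph satisfies −∂_t γ(0,0) = −c H + c ∂²_{x_n x_n} u(0,0)/|∇u(0,0)| + (1/|∇u(0,0)|) ∫_{ℝⁿ} (u(y,0) − Θ₀)₊ K(0,y) dy + ((ω(0,0) − β(u(0,0)) ∇u(0,0)/|∇u(0,0)|^α)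 · ∇u(0,0)/|∇u(0,0)|)₋, where H = Δ_{x'} γ(0,0) = Σ_{k=1}^{n−1} ∂²_{x_k x_k} γ(0,0). -/

import Mathlib

/-!
Differentiating `u (x', γ (x', t), t) = Θ₀` once at the origin gives `∂ⱼu = -∂ₙu ∂ⱼγ = 0` for
`j < n`, so `|∇u| = ∂ₙu`, and `∂ₜu = -∂ₙu ∂ₜγ`. At time `0` the first-order identity
`∂ⱼu(x', γ(x')) + ∂ⱼγ(x') ∂ₙu(x', γ(x')) = 0` holds for every `x'`; differentiating it once more
in `xⱼ` at the origin, where `∇γ = 0` kills the mixed terms, gives `∂ⱼⱼu = -∂ₙu ∂ⱼⱼγ`, hence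
`Δu = -|∇u| H + ∂ₙₙu`. Substituting into the equation and dividing by `|∇u| > 0` gives the
formula; the advection term is positively homogeneous, so its negative part scales too.
-/

open MeasureTheory

/-- Time derivative ∂_t f at a space-time point. -/
noncomputable def tder {m : ℕ} (f : ((Fin m → ℝ) × ℝ) → ℝ) (p : (Fin m → ℝ) × ℝ) : ℝ :=
  fderiv ℝ f p (0, 1)

/-- Spatial partial derivative ∂_{x_i} f at a space-time point. -/
noncomputable def pder {m : ℕ} (f : ((Fin m → ℝ) × ℝ) → ℝ) (p : (Fin m → ℝ) × ℝ)
    (i : Fin m) : ℝ :=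
  fderiv ℝ f p (Pi.single i 1, 0)

/-- Second spatial partial derivative ∂²_{x_i x_j} f at a space-time point
(space slice at fixed time). -/
noncomputable def pder2 {m : ℕ} (f : ((Fin m → ℝ) × ℝ) → ℝ) (p : (Fin m → ℝ) × ℝ)
    (i j : Fin m) : ℝ :=
  fderiv ℝ (fun x => fderiv ℝ (fun y => f (y, p.2)) x (Pi.single j 1)) p.1 (Pi.single i 1)

/-- Euclidean norm of a vector of ℝᵐ. -/
noncomputable def enorm' {m : ℕ} (v : Fin m → ℝ) : ℝ :=
  Real.sqrt (∑ i, v i ^ 2)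

section Snoc

variable {n : ℕ}

theorem Fin.snoc_zero_zero {α : Type*} [Zero α] :
    (Fin.snoc (0 : Fin n → α) 0 : Fin (n + 1) → α) = 0 := by
  ext i; refine Fin.lastCases ?_ (fun j => ?_) i <;> simp

theorem Fin.snoc_single_zero {α : Type*} [Zero α] (j : Fin n) (a : α) :
    (Fin.snoc (Pi.single j a) 0 : Fin (n + 1) → α) = Pi.single j.castSucc a := by
  ext i; refine Fin.lastCases ?_ (fun k => ?_) i
  · simp [(Fin.castSucc_lt_last j).ne]
  · simp [Pi.single_apply, Fin.castSucc_inj]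

theorem Fin.snoc_zero_eq_smul_single {R : Type*} [MulZeroOneClass R] (a : R) :
    (Fin.snoc (0 : Fin n → R) a : Fin (n + 1) → R) = a • Pi.single (Fin.last n) 1 := by
  ext i; refine Fin.lastCases ?_ (fun j => ?_) i
  · simp
  · simp [(Fin.castSucc_lt_last j).ne]

variable (n) in
noncomputable def snocCLM : (Fin n → ℝ) × ℝ →L[ℝ] (Fin (n + 1) → ℝ) :=
  LinearMap.toContinuousLinearMap
    { toFun := fun p => Fin.snoc p.1 p.2
      map_add' := fun p q => by ext i; refine Fin.lastCases ?_ (fun j => ?_) i <;> simp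
      map_smul' := fun a p => by ext i; refine Fin.lastCases ?_ (fun j => ?_) i <;> simp }

@[simp] theorem snocCLM_apply (p : (Fin n → ℝ) × ℝ) : snocCLM n p = Fin.snoc p.1 p.2 := rfl

end Snoc

section Calculus

variable {𝕜 E F G : Type*} [NontriviallyNormedField 𝕜]
  [NormedAddCommGroup E] [NormedSpace 𝕜 E] [NormedAddCommGroup F] [NormedSpace 𝕜 F]
  [NormedAddCommGroup G] [NormedSpace 𝕜 G]

theorem fderiv_comp_eq_zero_of_forall_eq {f : F → G} {g : E → F} {x : E} {c : G}
    (hf : DifferentiableAt 𝕜 f (g x)) (hg : DifferentiableAt 𝕜 g x) (h : ∀ y, f (g y) = c) :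
    (fderiv 𝕜 f (g x)).comp (fderiv 𝕜 g x) = 0 := by
  rw [← fderiv_comp x hf hg, show f ∘ g = fun _ => c from funext h, fderiv_const_apply]

theorem fderiv_prodMk_left_apply {f : E × F → G} {x : E} {t : F}
    (hf : DifferentiableAt 𝕜 f (x, t)) (v : E) :
    fderiv 𝕜 (fun y => f (y, t)) x v = fderiv 𝕜 f (x, t) (v, 0) := by
  have h : HasFDerivAt (fun y => f (y, t)) ((fderiv 𝕜 f (x, t)).comp (.inl 𝕜 E F)) x :=
    hf.hasFDerivAt.comp x (hasFDerivAt_prodMk_left x t)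
  rw [h.fderiv]
  rfl

theorem fderiv_fderiv_apply_const {f : E → F} {x : E} (hf : DifferentiableAt 𝕜 (fderiv 𝕜 f) x)
    (v w : E) : fderiv 𝕜 (fun y => fderiv 𝕜 f y v) x w = fderiv 𝕜 (fderiv 𝕜 f) x w v := by
  rw [fderiv_clm_apply hf (differentiableAt_const v)]
  simp

end Calculus

section LevelSet

variable {n : ℕ} {T : Type*} [NormedAddCommGroup T] [NormedSpace ℝ T]

theorem fderiv_apply_snoc_eq_zero_of_level {u : (Fin (n + 1) → ℝ) × T → ℝ}
    {γ : (Fin n → ℝ) × T → ℝ} {θ : ℝ} {q : (Fin n → ℝ) × T}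
    (hu : DifferentiableAt ℝ u (Fin.snoc q.1 (γ q), q.2)) (hγ : DifferentiableAt ℝ γ q)
    (hlevel : ∀ x t, u (Fin.snoc x (γ (x, t)), t) = θ) (w : (Fin n → ℝ) × T) :
    fderiv ℝ u (Fin.snoc q.1 (γ q), q.2) (Fin.snoc w.1 (fderiv ℝ γ q w), w.2) = 0 := by
  have hF : HasFDerivAt
      (fun p : (Fin n → ℝ) × T => ((Fin.snoc p.1 (γ p) : Fin (n + 1) → ℝ), p.2))
      (((snocCLM n).comp ((ContinuousLinearMap.fst ℝ _ _).prod (fderiv ℝ γ q))).prod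
        (ContinuousLinearMap.snd ℝ _ _)) q :=
    ((snocCLM n).hasFDerivAt.comp q (hasFDerivAt_fst.prodMk hγ.hasFDerivAt)).prodMk
      hasFDerivAt_snd
  have h := fderiv_comp_eq_zero_of_forall_eq (x := q) (c := θ) hu hF.differentiableAt
    fun p => hlevel p.1 p.2
  rw [hF.fderiv] at h
  simpa using congr($h w)

theorem fderiv_fderiv_snoc_add_eq_zero {U : (Fin (n + 1) → ℝ) → ℝ} {Γ : (Fin n → ℝ) → ℝ}
    {x v : Fin n → ℝ} (hΓ : DifferentiableAt ℝ Γ x)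
    (hU2 : DifferentiableAt ℝ (fderiv ℝ U) (Fin.snoc x (Γ x)))
    (hΓ2 : DifferentiableAt ℝ (fderiv ℝ Γ) x)
    (hfirst : ∀ y, fderiv ℝ U (Fin.snoc y (Γ y)) (Fin.snoc v (fderiv ℝ Γ y v)) = 0)
    (hv : fderiv ℝ Γ x v = 0) :
    fderiv ℝ (fderiv ℝ U) (Fin.snoc x (Γ x)) (Fin.snoc v 0) (Fin.snoc v 0)
      + fderiv ℝ U (Fin.snoc x (Γ x)) (Fin.snoc 0 (fderiv ℝ (fderiv ℝ Γ) x v v)) = 0 := by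
  have hG := (snocCLM n).hasFDerivAt.comp x ((hasFDerivAt_id x).prodMk hΓ.hasFDerivAt)
  have hw := (snocCLM n).hasFDerivAt.comp x
    ((hasFDerivAt_const v x).prodMk (hΓ2.hasFDerivAt.clm_apply (hasFDerivAt_const v x)))
  have h : HasFDerivAt
      (fun y => fderiv ℝ U (Fin.snoc y (Γ y)) (Fin.snoc v (fderiv ℝ Γ y v))) _ x :=
    (hU2.hasFDerivAt.comp x hG).clm_apply hw
  simp only [hfirst] at h
  have := congr($((hasFDerivAt_const 0 x).unique h) v)
  simpa [hv, add_comm] using this.symm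

end LevelSet

section Origin

variable {n : ℕ} {θ : ℝ} {u : (Fin (n + 1) → ℝ) × ℝ → ℝ} {γ : (Fin n → ℝ) × ℝ → ℝ}

theorem pder_castSucc_eq_zero (hu : DifferentiableAt ℝ u (0, 0))
    (hγ : DifferentiableAt ℝ γ (0, 0)) (hlevel : ∀ x t, u (Fin.snoc x (γ (x, t)), t) = θ)
    (hγ0 : γ (0, 0) = 0) (hgrad : ∀ j : Fin n, fderiv ℝ γ (0, 0) (Pi.single j 1, 0) = 0)
    (j : Fin n) : pder u (0, 0) j.castSucc = 0 := by
  have h := fderiv_apply_snoc_eq_zero_of_level (q := (0, 0))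
    (by simpa [hγ0, Fin.snoc_zero_zero] using hu) hγ hlevel (Pi.single j 1, 0)
  simpa [hγ0, hgrad j, Fin.snoc_zero_zero, Fin.snoc_single_zero, pder] using h

theorem tder_add_mul_tder_eq_zero (hu : DifferentiableAt ℝ u (0, 0))
    (hγ : DifferentiableAt ℝ γ (0, 0)) (hlevel : ∀ x t, u (Fin.snoc x (γ (x, t)), t) = θ)
    (hγ0 : γ (0, 0) = 0) :
    tder u (0, 0) + pder u (0, 0) (Fin.last n) * tder γ (0, 0) = 0 := by
  have h := fderiv_apply_snoc_eq_zero_of_level (q := (0, 0))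
    (by simpa [hγ0, Fin.snoc_zero_zero] using hu) hγ hlevel (0, 1)
  have hsplit : ((Fin.snoc 0 (tder γ (0, 0)) : Fin (n + 1) → ℝ), (1 : ℝ))
      = tder γ (0, 0) • (Pi.single (Fin.last n) 1, 0) + (0, 1) := by
    ext <;> simp [Fin.snoc_zero_eq_smul_single]
  simp only [hγ0, Fin.snoc_zero_zero] at h
  rw [← tder, hsplit, map_add, map_smul, smul_eq_mul] at h
  rw [tder, pder]
  linarith

theorem pder2_castSucc_eq (hu : Differentiable ℝ u)
    (hu2 : DifferentiableAt ℝ (fderiv ℝ (fun x : Fin (n + 1) → ℝ => u (x, 0))) 0)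
    (hγ : Differentiable ℝ γ)
    (hγ2 : DifferentiableAt ℝ (fderiv ℝ (fun x' : Fin n → ℝ => γ (x', 0))) 0)
    (hlevel : ∀ x t, u (Fin.snoc x (γ (x, t)), t) = θ) (hγ0 : γ (0, 0) = 0)
    (hgrad : ∀ j : Fin n, fderiv ℝ γ (0, 0) (Pi.single j 1, 0) = 0) (j : Fin n) :
    pder2 u (0, 0) j.castSucc j.castSucc
      = -(pder u (0, 0) (Fin.last n) * pder2 γ (0, 0) j j) := by
  set U : (Fin (n + 1) → ℝ) → ℝ := fun x => u (x, 0)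
  set Γ : (Fin n → ℝ) → ℝ := fun x' => γ (x', 0)
  have hfirst : ∀ y, fderiv ℝ U (Fin.snoc y (Γ y))
      (Fin.snoc (Pi.single j 1) (fderiv ℝ Γ y (Pi.single j 1))) = 0 := by
    intro y
    rw [fderiv_prodMk_left_apply (hγ _), fderiv_prodMk_left_apply (hu _)]
    exact fderiv_apply_snoc_eq_zero_of_level (q := (y, 0)) (hu _) (hγ _) hlevel
      (Pi.single j 1, 0)
  have hv : fderiv ℝ Γ 0 (Pi.single j 1) = 0 := by
    rw [fderiv_prodMk_left_apply (hγ _)]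
    exact hgrad j
  have hΓ0 : (Fin.snoc (0 : Fin n → ℝ) (Γ 0) : Fin (n + 1) → ℝ) = 0 := by
    simp only [Γ, hγ0, Fin.snoc_zero_zero]
  have hΓ : DifferentiableAt ℝ Γ 0 :=
    (hγ _).comp _ (hasFDerivAt_prodMk_left _ _).differentiableAt
  have h := fderiv_fderiv_snoc_add_eq_zero hΓ (by rwa [hΓ0]) hγ2 hfirst hv
  rw [hΓ0, Fin.snoc_single_zero, Fin.snoc_zero_eq_smul_single, map_smul, smul_eq_mul,
    fderiv_prodMk_left_apply (hu _)] at h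
  rw [pder2, pder2, fderiv_fderiv_apply_const hu2, fderiv_fderiv_apply_const hγ2, pder]
  linarith

end Origin

theorem enorm'_eq_last {n : ℕ} {v : Fin (n + 1) → ℝ} (h : ∀ j : Fin n, v j.castSucc = 0)
    (hv : 0 ≤ v (Fin.last n)) : enorm' v = v (Fin.last n) := by
  simp [enorm', Fin.sum_univ_castSucc, h, Real.sqrt_sq hv]

theorem max_zero_neg_sum_mul_eq {ι : Type*} [Fintype ι] {N : ℝ} (hN : 0 < N) (a b : ι → ℝ) :
    max 0 (-∑ i, a i * b i) = N * max 0 (-∑ i, a i * (b i / N)) := by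
  rw [mul_max_of_nonneg _ _ hN.le, mul_zero, mul_neg, Finset.mul_sum]
  congr 3 with i
  field_simp

theorem stmt_8_general (n : ℕ) (Θ₀ c : ℝ) (α : ℝ)
    (K : (Fin (n + 1) → ℝ) → (Fin (n + 1) → ℝ) → ℝ)
    (ω : ((Fin (n + 1) → ℝ) × ℝ) → (Fin (n + 1) → ℝ)) (β : ℝ → ℝ)
    (u : ((Fin (n + 1) → ℝ) × ℝ) → ℝ) (γ : ((Fin n → ℝ) × ℝ) → ℝ)
    (hu : Differentiable ℝ u)
    (hu2 : ∀ t : ℝ, Differentiable ℝ (fderiv ℝ (fun x : Fin (n + 1) → ℝ => u (x, t))))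
    (hγ : Differentiable ℝ γ)
    (hγ2 : ∀ t : ℝ, Differentiable ℝ (fderiv ℝ (fun x' : Fin n → ℝ => γ (x', t))))
    (hlevel : ∀ (x' : Fin n → ℝ) (t : ℝ), u (Fin.snoc x' (γ (x', t)), t) = Θ₀)
    (hγ0 : γ (0, 0) = 0)
    (hgrad : ∀ j : Fin n, fderiv ℝ γ (0, 0) (Pi.single j 1, 0) = 0)
    (hn : 0 < pder u (0, 0) (Fin.last n))
    (heq : tder u (0, 0)
        = c * (∑ i : Fin (n + 1), pder2 u (0, 0) i i)
          + (∫ y : Fin (n + 1) → ℝ, max 0 (u (y, (0 : ℝ)) - Θ₀) * K 0 y)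
          + max 0 (-(∑ i : Fin (n + 1),
              (ω (0, 0) i
                  - β (u (0, 0)) * pder u (0, 0) i
                      / (enorm' (fun k => pder u (0, 0) k)) ^ α)
                * pder u (0, 0) i))) :
    -(tder γ (0, 0))
      = -(c * (∑ k : Fin n, pder2 γ (0, 0) k k))
        + c * pder2 u (0, 0) (Fin.last n) (Fin.last n)
            / enorm' (fun k => pder u (0, 0) k)
        + (1 / enorm' (fun k => pder u (0, 0) k))
            * (∫ y : Fin (n + 1) → ℝ, max 0 (u (y, (0 : ℝ)) - Θ₀) * K 0 y)
        + max 0 (-(∑ i : Fin (n + 1),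
            (ω (0, 0) i
                - β (u (0, 0)) * pder u (0, 0) i
                    / (enorm' (fun k => pder u (0, 0) k)) ^ α)
              * (pder u (0, 0) i / enorm' (fun k => pder u (0, 0) k)))) := by
  set N := pder u (0, 0) (Fin.last n)
  have hnorm : enorm' (fun k => pder u (0, 0) k) = N :=
    enorm'_eq_last (pder_castSucc_eq_zero (hu _) (hγ _) hlevel hγ0 hgrad) hn.le
  have hlap : ∑ i, pder2 u (0, 0) i i
      = -(N * ∑ k, pder2 γ (0, 0) k k) + pder2 u (0, 0) (Fin.last n) (Fin.last n) := by
    rw [Fin.sum_univ_castSucc, Finset.mul_sum, ← Finset.sum_neg_distrib]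
    congr 1
    exact Finset.sum_congr rfl fun j _ =>
      pder2_castSucc_eq hu (hu2 0 0) hγ (hγ2 0 0) hlevel hγ0 hgrad j
  have htime : tder u (0, 0) + N * tder γ (0, 0) = 0 :=
    tder_add_mul_tder_eq_zero (hu _) (hγ _) hlevel hγ0
  have hsolve : ∀ {tu tγ H uNN I M : ℝ}, tu + N * tγ = 0 →
      tu = c * (-(N * H) + uNN) + I + N * M → -tγ = -(c * H) + c * uNN / N + 1 / N * I + M := by
    intro tu tγ H uNN I M h1 h2
    field_simp
    linarith
  rw [hnorm, max_zero_neg_sum_mul_eq hn, hlap] at heq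
  rw [hnorm]
  exact hsolve htime heq

theorem stmt_8 (n : ℕ) (Θ₀ c : ℝ) (hc : 0 < c) (α : ℝ) (hα : α ∈ Set.Icc (0 : ℝ) 2)
    (K : (Fin (n + 1) → ℝ) → (Fin (n + 1) → ℝ) → ℝ) (hK : ∀ x y, 0 ≤ K x y)
    (ω : ((Fin (n + 1) → ℝ) × ℝ) → (Fin (n + 1) → ℝ)) (β : ℝ → ℝ)
    (u : ((Fin (n + 1) → ℝ) × ℝ) → ℝ) (γ : ((Fin n → ℝ) × ℝ) → ℝ)
    (hu : Differentiable ℝ u)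
    (hu2 : ∀ t : ℝ, Differentiable ℝ (fderiv ℝ (fun x : Fin (n + 1) → ℝ => u (x, t))))
    (hγ : Differentiable ℝ γ)
    (hγ2 : ∀ t : ℝ, Differentiable ℝ (fderiv ℝ (fun x' : Fin n → ℝ => γ (x', t))))
    (hlevel : ∀ (x' : Fin n → ℝ) (t : ℝ), u (Fin.snoc x' (γ (x', t)), t) = Θ₀)
    (hγ0 : γ (0, 0) = 0)
    (hgrad : ∀ j : Fin n, fderiv ℝ γ (0, 0) (Pi.single j 1, 0) = 0)
    (hn : 0 < pder u (0, 0) (Fin.last n))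
    (hint : Integrable (fun y : Fin (n + 1) → ℝ => max 0 (u (y, (0 : ℝ)) - Θ₀) * K 0 y))
    (heq : tder u (0, 0)
        = c * (∑ i : Fin (n + 1), pder2 u (0, 0) i i)
          + (∫ y : Fin (n + 1) → ℝ, max 0 (u (y, (0 : ℝ)) - Θ₀) * K 0 y)
          + max 0 (-(∑ i : Fin (n + 1),
              (ω (0, 0) i
                  - β (u (0, 0)) * pder u (0, 0) i
                      / (enorm' (fun k => pder u (0, 0) k)) ^ α)
                * pder u (0, 0) i))) :
    -(tder γ (0, 0))
      = -(c * (∑ k : Fin n, pder2 γ (0, 0) k k))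
        + c * pder2 u (0, 0) (Fin.last n) (Fin.last n)
            / enorm' (fun k => pder u (0, 0) k)
        + (1 / enorm' (fun k => pder u (0, 0) k))
            * (∫ y : Fin (n + 1) → ℝ, max 0 (u (y, (0 : ℝ)) - Θ₀) * K 0 y)
        + max 0 (-(∑ i : Fin (n + 1),
            (ω (0, 0) i
                - β (u (0, 0)) * pder u (0, 0) i
                    / (enorm' (fun k => pder u (0, 0) k)) ^ α)
              * (pder u (0, 0) i / enorm' (fun k => pder u (0, 0) k)))) :=
  stmt_8_general n Θ₀ c α K ω β u γ hu hu2 hγ hγ2 hlevel hγ0 hgrad hn heq
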